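/- The octagon additive continued fraction expansion determines a unique point: if u, u' ∈ ℝ and s : ℕ → {1,…,7} are such that for every k ≥ 0 both Fᵏ(u) and Fᵏ(u') lie in the interior int(Σ_{s(k)}) of the sector Σ_{s(k)}, then u = u'. -/

import Mathlib

open MeasureTheory Set

noncomputable section

/-- The linear fractional transformation of `ℝ` induced by a 2×2 real matrix,
with the convention that the value is `0` when the denominator vanishes. -/
def mob (M : Matrix (Fin 2) (Fin 2) ℝ) (u : ℝ) : ℝ :=
  (M 0 0 * u + M 0 1) / (M 1 0 * u + M 1 1)

/-- The matrix `γ = [[-1, 2+2√2],[0,1]]`. -/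
def gam : Matrix (Fin 2) (Fin 2) ℝ := !![-1, 2 + 2 * Real.sqrt 2; 0, 1]

/-- The isometries `ν₁, …, ν₇` of the octagon. -/
def nu : ℕ → Matrix (Fin 2) (Fin 2) ℝ
  | 1 => (Real.sqrt 2)⁻¹ • !![1, 1; 1, -1]
  | 2 => (Real.sqrt 2)⁻¹ • !![1, 1; -1, 1]
  | 3 => !![0, 1; 1, 0]
  | 4 => !![0, 1; -1, 0]
  | 5 => (Real.sqrt 2)⁻¹ • !![-1, 1; 1, 1]
  | 6 => (Real.sqrt 2)⁻¹ • !![-1, 1; -1, -1]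
  | 7 => !![-1, 0; 0, 1]
  | _ => 1

/-- The index `i` of the sector `Σᵢ` (in inverse-slope coordinates) containing `u`:
`Σ₀ = (1+√2, ∞)`, `Σ₁ = (1, 1+√2]`, `Σ₂ = (√2-1, 1]`, `Σ₃ = (0, √2-1]`, `Σ₄ = (1-√2, 0]`,
`Σ₅ = (-1, 1-√2]`, `Σ₆ = (-1-√2, -1]`, `Σ₇ = (-∞, -1-√2]`. -/
def sectorIndex (u : ℝ) : ℕ :=
  if 1 + Real.sqrt 2 < u then 0
  else if 1 < u then 1
  else if Real.sqrt 2 - 1 < u then 2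
  else if 0 < u then 3
  else if 1 - Real.sqrt 2 < u then 4
  else if -1 < u then 5
  else if -(1 + Real.sqrt 2) < u then 6
  else 7

/-- The octagon Farey map in inverse-slope coordinates: `F(u) = (γ·νᵢ)[u]` for `u ∈ Σᵢ`
(`i = 1,…,7`), and `F(u) = u` for `u ∈ Σ₀`. -/
def F (u : ℝ) : ℝ :=
  if sectorIndex u = 0 then u else mob (gam * nu (sectorIndex u)) u

/-- The interiors of the sectors `Σ₁, …, Σ₇`. -/
def sInt : ℕ → Set ℝ
  | 1 => Set.Ioo 1 (1 + Real.sqrt 2)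
  | 2 => Set.Ioo (Real.sqrt 2 - 1) 1
  | 3 => Set.Ioo 0 (Real.sqrt 2 - 1)
  | 4 => Set.Ioo (1 - Real.sqrt 2) 0
  | 5 => Set.Ioo (-1) (1 - Real.sqrt 2)
  | 6 => Set.Ioo (-(1 + Real.sqrt 2)) (-1)
  | 7 => Set.Iio (-(1 + Real.sqrt 2))
  | _ => ∅

/-!
On the sector `Σᵢ` the map `F` is the linear fractional map of `γ νᵢ`, a matrix of determinant
`±1` whose bottom row is that of `νᵢ`. Hence `|F v - F w| = |v - w| / (q v * q w)`, where the
denominator `q` lies in `(0, 1]` on every sector, and in `(0, 1/√2]` on `Σ₂, …, Σ₅` and on the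
part of `Σ₁` and `Σ₆` that `F` maps below `1`. So the distance between two orbits with the same
itinerary never decreases, and it doubles at every step in `Σ₂, …, Σ₅` and at every step in `Σ₁`
or `Σ₆` after which the orbit does not enter `Σ₁`.

An orbit cannot stay in `Σ₇` forever, since `F` translates it by `2 + 2√2`, nor in `Σ₁`, since
`1 + √2` is a parabolic fixed point: `1 / (F v - (1 + √2)) = 1 / (v - (1 + √2)) + 1 / √2`.
Hence the distance is bounded by `√2`, the largest width of a bounded sector, while doubling steps
occur infinitely often; so the distance is `0`.
-/

open Function

lemma exists_lt_of_forall_add_const {x : ℕ → ℝ} {δ : ℝ} (hδ : 0 < δ)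
    (hx : ∀ k, x (k + 1) = x k + δ) (b : ℝ) : ∃ k, b < x k := by
  have hlin : ∀ k : ℕ, x k = x 0 + k * δ := fun k => by
    induction k with
    | zero => simp
    | succ k ih => rw [hx, ih]; push_cast; ring
  obtain ⟨k, hk⟩ := exists_nat_gt ((b - x 0) / δ)
  refine ⟨k, ?_⟩
  rw [div_lt_iff₀ hδ] at hk
  linarith [hlin k]

lemma not_bddAbove_range_of_frequently_two_mul_le {d : ℕ → ℝ} (hd : Monotone d) (h0 : 0 < d 0)
    (h : ∀ m, ∃ k ≥ m, 2 * d k ≤ d (k + 1)) : ¬ BddAbove (range d) := by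
  have hpow : ∀ n : ℕ, ∃ k, 2 ^ n * d 0 ≤ d k := by
    intro n
    induction n with
    | zero => exact ⟨0, by simp⟩
    | succ n ih =>
      obtain ⟨k, hk⟩ := ih
      obtain ⟨k', hk', hdbl⟩ := h k
      refine ⟨k' + 1, ?_⟩
      calc 2 ^ (n + 1) * d 0 = 2 * (2 ^ n * d 0) := by ring
        _ ≤ 2 * d k' := by linarith [hd hk']
        _ ≤ d (k' + 1) := hdbl
  rintro ⟨B, hB⟩
  obtain ⟨n, hn⟩ := pow_unbounded_of_one_lt (B / d 0) one_lt_two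
  obtain ⟨k, hk⟩ := hpow n
  rw [div_lt_iff₀ h0] at hn
  linarith [hB (mem_range_self k)]

lemma exists_expanding_index {s : ℕ → ℕ} (h7 : ∀ m, ∃ k ≥ m, s k ≠ 7)
    (h1 : ∀ m, ∃ k ≥ m, s k ≠ 1) (m : ℕ) :
    ∃ k ≥ m, s k ≠ 7 ∧ (s k = 1 ∨ s k = 6 → s (k + 1) ≠ 1) := by
  by_contra! h
  obtain ⟨k₀, hk₀, hk₀7⟩ := h7 m
  have hone : ∀ k ≥ k₀ + 1, s k = 1 := by
    intro k hk
    induction k, hk using Nat.le_induction with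
    | base => exact (h k₀ hk₀ hk₀7).2
    | succ k hk ih => exact (h k (by omega) (by rw [ih]; decide)).2
  obtain ⟨k, hk, hk1⟩ := h1 (k₀ + 1)
  exact hk1 (hone k hk)

lemma mob_sub_mob (M : Matrix (Fin 2) (Fin 2) ℝ) {v w : ℝ}
    (hv : M 1 0 * v + M 1 1 ≠ 0) (hw : M 1 0 * w + M 1 1 ≠ 0) :
    mob M v - mob M w = M.det * (v - w) / ((M 1 0 * v + M 1 1) * (M 1 0 * w + M 1 1)) := by
  rw [mob, mob, div_sub_div _ _ hv hw, Matrix.det_fin_two]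
  ring_nf

lemma one_le_and_le_seven_of_mem_sInt {i : ℕ} {v : ℝ} (hv : v ∈ sInt i) : 1 ≤ i ∧ i ≤ 7 := by
  rcases i with _|_|_|_|_|_|_|_|i <;> first | exact hv.elim | omega

lemma sectorIndex_eq_of_mem_sInt {i : ℕ} {v : ℝ} (hv : v ∈ sInt i) : sectorIndex v = i := by
  have := Real.one_lt_sqrt_two
  have := Real.sqrt_two_lt_three_halves
  rcases i with _|_|_|_|_|_|_|_|i <;>
    simp only [sInt, mem_Ioo, mem_Iio, mem_empty_iff_false] at hv <;>
    unfold sectorIndex <;> split_ifs <;> first | rfl | (exfalso; linarith)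

lemma lt_one_of_mem_sInt {j : ℕ} (hj : j ≠ 1) {v : ℝ} (hv : v ∈ sInt j) : v < 1 := by
  have := Real.one_lt_sqrt_two
  rcases j with _|_|_|_|_|_|_|_|j <;>
    simp only [sInt, mem_Ioo, mem_Iio, mem_empty_iff_false] at hv <;>
    first | exact absurd rfl hj | linarith [Real.sqrt_two_lt_three_halves]

lemma abs_sub_le_sqrt_two_of_mem_sInt {i : ℕ} (hi : i ≠ 7) {v w : ℝ} (hv : v ∈ sInt i)
    (hw : w ∈ sInt i) : |v - w| ≤ √2 := by
  have := Real.one_lt_sqrt_two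
  rw [abs_le]
  rcases i with _|_|_|_|_|_|_|_|i <;>
    simp only [sInt, mem_Ioo, mem_Iio, mem_empty_iff_false] at hv hw <;>
    first | exact absurd rfl hi | constructor <;> linarith

lemma abs_det_gam_mul_nu (i : ℕ) : |(gam * nu i).det| = 1 := by
  have h2 : √2 ^ 2 = 2 := Real.sq_sqrt zero_le_two
  rw [Matrix.det_mul, gam, Matrix.det_fin_two_of]
  rcases i with _|_|_|_|_|_|_|_|i <;>
    simp only [nu, Matrix.det_one, Matrix.det_smul, Matrix.det_fin_two_of, Fintype.card_fin] <;>
    norm_num [h2]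

lemma gam_mul_apply_one (M : Matrix (Fin 2) (Fin 2) ℝ) (j : Fin 2) : (gam * M) 1 j = M 1 j := by
  simp [gam, Matrix.mul_apply, Fin.sum_univ_two]

lemma F_eq_mob_of_mem_sInt {i : ℕ} {v : ℝ} (hv : v ∈ sInt i) : F v = mob (gam * nu i) v := by
  have hi : i ≠ 0 := by rintro rfl; exact hv
  rw [F, sectorIndex_eq_of_mem_sInt hv, if_neg hi]

def sectorDenom : ℕ → ℝ → ℝ
  | 1, v => (v - 1) / √2
  | 2, v => (1 - v) / √2
  | 3, v => v
  | 4, v => -v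
  | 5, v => (v + 1) / √2
  | 6, v => -(v + 1) / √2
  | _, _ => 1

lemma gam_mul_nu_denom (i : ℕ) (v : ℝ) :
    (gam * nu i) 1 0 * v + (gam * nu i) 1 1 = sectorDenom i v := by
  rw [gam_mul_apply_one, gam_mul_apply_one]
  rcases i with _|_|_|_|_|_|_|_|i <;>
    simp only [nu, sectorDenom, Matrix.smul_apply, Matrix.of_apply, Matrix.cons_val',
      Matrix.cons_val_zero, Matrix.cons_val_one, Matrix.cons_val_fin_one, smul_eq_mul,
      Matrix.one_fin_two] <;>
    ring

lemma F_eq_div_sectorDenom {i : ℕ} {v : ℝ} (hv : v ∈ sInt i) :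
    F v = ((gam * nu i) 0 0 * v + (gam * nu i) 0 1) / sectorDenom i v := by
  rw [F_eq_mob_of_mem_sInt hv, mob, gam_mul_nu_denom]

lemma sectorDenom_mem_Ioc {i : ℕ} {v : ℝ} (hv : v ∈ sInt i) : sectorDenom i v ∈ Ioc 0 1 := by
  have := Real.one_lt_sqrt_two
  have := Real.sqrt_two_lt_three_halves
  have : (√2)⁻¹ * √2 = 1 := inv_mul_cancel₀ (by positivity)
  have : 0 < (√2)⁻¹ := by positivity
  rcases i with _|_|_|_|_|_|_|_|i <;>
    simp only [sInt, mem_Ioo, mem_Iio, mem_empty_iff_false] at hv <;>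
    simp only [sectorDenom, div_eq_mul_inv, mem_Ioc] <;> constructor <;> nlinarith

lemma F_eq_of_mem_sInt_one {v : ℝ} (hv : v ∈ sInt 1) :
    F v = ((1 + 2 * √2) * v - (3 + 2 * √2)) / (v - 1) := by
  rw [F_eq_div_sectorDenom hv, sectorDenom, div_div_eq_mul_div]
  congr 1
  simp only [gam, nu, Matrix.mul_apply, Fin.sum_univ_two, Matrix.smul_apply, Matrix.of_apply,
    Matrix.cons_val', Matrix.cons_val_zero, Matrix.cons_val_one, Matrix.cons_val_fin_one,
    smul_eq_mul]
  field_simp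
  ring

lemma F_eq_of_mem_sInt_six {v : ℝ} (hv : v ∈ sInt 6) :
    F v = ((1 + 2 * √2) * v + (3 + 2 * √2)) / (v + 1) := by
  rw [F_eq_div_sectorDenom hv, sectorDenom, div_div_eq_mul_div, div_neg, ← neg_div]
  congr 1
  simp only [gam, nu, Matrix.mul_apply, Fin.sum_univ_two, Matrix.smul_apply, Matrix.of_apply,
    Matrix.cons_val', Matrix.cons_val_zero, Matrix.cons_val_one, Matrix.cons_val_fin_one,
    smul_eq_mul]
  field_simp
  ring

lemma F_eq_add_of_mem_sInt_seven {v : ℝ} (hv : v ∈ sInt 7) : F v = v + (2 + 2 * √2) := by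
  simp [F_eq_div_sectorDenom hv, sectorDenom, gam, nu, Matrix.mul_apply]

lemma one_div_F_sub_of_mem_sInt_one {v : ℝ} (hv : v ∈ sInt 1) :
    1 / (F v - (1 + √2)) = 1 / (v - (1 + √2)) + (√2)⁻¹ := by
  have h2 : √2 ^ 2 = 2 := Real.sq_sqrt zero_le_two
  have hv1 : v - 1 ≠ 0 := by linarith [hv.1]
  have hvp : v - (1 + √2) ≠ 0 := by linarith [hv.2]
  have hF : F v - (1 + √2) = √2 * (v - (1 + √2)) / (v - 1) := by
    rw [F_eq_of_mem_sInt_one hv, div_sub' hv1]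
    congr 1
    linear_combination h2
  rw [hF]
  field_simp
  ring

lemma abs_F_sub_F_of_mem_sInt {i : ℕ} {v w : ℝ} (hv : v ∈ sInt i) (hw : w ∈ sInt i) :
    |F v - F w| = |v - w| / (sectorDenom i v * sectorDenom i w) := by
  have hdv := (sectorDenom_mem_Ioc hv).1
  have hdw := (sectorDenom_mem_Ioc hw).1
  rw [F_eq_mob_of_mem_sInt hv, F_eq_mob_of_mem_sInt hw, mob_sub_mob, gam_mul_nu_denom,
    gam_mul_nu_denom, abs_div, abs_mul, abs_det_gam_mul_nu, one_mul,
    abs_of_pos (mul_pos hdv hdw)]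
  all_goals rw [gam_mul_nu_denom]; positivity

lemma abs_sub_le_mul_abs_F_sub {i : ℕ} {v w ρ : ℝ} (hv : v ∈ sInt i) (hw : w ∈ sInt i)
    (hρv : sectorDenom i v ≤ ρ) (hρw : sectorDenom i w ≤ ρ) :
    |v - w| ≤ ρ ^ 2 * |F v - F w| := by
  have hdv := (sectorDenom_mem_Ioc hv).1
  have hdw := (sectorDenom_mem_Ioc hw).1
  rw [abs_F_sub_F_of_mem_sInt hv hw, ← mul_div_assoc, le_div_iff₀ (mul_pos hdv hdw), mul_comm]
  gcongr
  nlinarith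

lemma abs_sub_le_abs_F_sub {i : ℕ} {v w : ℝ} (hv : v ∈ sInt i) (hw : w ∈ sInt i) :
    |v - w| ≤ |F v - F w| := by
  simpa using
    abs_sub_le_mul_abs_F_sub hv hw (sectorDenom_mem_Ioc hv).2 (sectorDenom_mem_Ioc hw).2

lemma sectorDenom_le_inv_sqrt_two_of_mem_Icc {i : ℕ} (hi : 2 ≤ i ∧ i ≤ 5) {v : ℝ}
    (hv : v ∈ sInt i) : sectorDenom i v ≤ (√2)⁻¹ := by
  have := Real.one_lt_sqrt_two
  have := Real.sqrt_two_lt_three_halves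
  have : √2 ^ 2 = 2 := Real.sq_sqrt zero_le_two
  have : (√2)⁻¹ * √2 = 1 := inv_mul_cancel₀ (by positivity)
  have : 0 < (√2)⁻¹ := by positivity
  obtain ⟨hi2, hi5⟩ := hi
  interval_cases i <;> simp only [sInt, mem_Ioo] at hv <;>
    simp only [sectorDenom, div_eq_mul_inv] <;> nlinarith

lemma sectorDenom_le_inv_sqrt_two_of_F_lt_one {i : ℕ} (hi : i = 1 ∨ i = 6) {v : ℝ}
    (hv : v ∈ sInt i) (hF : F v < 1) : sectorDenom i v ≤ (√2)⁻¹ := by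
  have := Real.one_lt_sqrt_two
  rw [← one_div]
  rcases hi with rfl | rfl
  · rw [F_eq_of_mem_sInt_one hv, div_lt_one (by linarith [hv.1])] at hF
    rw [sectorDenom]
    gcongr
    nlinarith [hv.1]
  · rw [F_eq_of_mem_sInt_six hv, div_lt_one_of_neg (by linarith [hv.2])] at hF
    rw [sectorDenom]
    gcongr
    nlinarith [hv.1]

lemma two_mul_abs_sub_le_abs_F_sub {i : ℕ} (h7 : i ≠ 7) {v w : ℝ}
    (h16 : i = 1 ∨ i = 6 → F v < 1 ∧ F w < 1) (hv : v ∈ sInt i) (hw : w ∈ sInt i) :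
    2 * |v - w| ≤ |F v - F w| := by
  have hρ : sectorDenom i v ≤ (√2)⁻¹ ∧ sectorDenom i w ≤ (√2)⁻¹ := by
    by_cases hi : i = 1 ∨ i = 6
    · exact ⟨sectorDenom_le_inv_sqrt_two_of_F_lt_one hi hv (h16 hi).1,
        sectorDenom_le_inv_sqrt_two_of_F_lt_one hi hw (h16 hi).2⟩
    · have := one_le_and_le_seven_of_mem_sInt hv
      have hi' : 2 ≤ i ∧ i ≤ 5 := by omega
      exact ⟨sectorDenom_le_inv_sqrt_two_of_mem_Icc hi' hv,
        sectorDenom_le_inv_sqrt_two_of_mem_Icc hi' hw⟩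
  have := abs_sub_le_mul_abs_F_sub hv hw hρ.1 hρ.2
  rw [inv_pow, Real.sq_sqrt zero_le_two] at this
  linarith

lemma not_forall_iterate_mem_sInt_seven (v : ℝ) : ¬ ∀ k, F^[k] v ∈ sInt 7 := by
  intro h
  obtain ⟨k, hk⟩ := exists_lt_of_forall_add_const (x := fun k => F^[k] v) (δ := 2 + 2 * √2)
    (by positivity)
    (fun k => by simp only [iterate_succ_apply', F_eq_add_of_mem_sInt_seven (h k)])
    (-(1 + √2))
  exact (h k).not_gt hk

lemma not_forall_iterate_mem_sInt_one (v : ℝ) : ¬ ∀ k, F^[k] v ∈ sInt 1 := by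
  intro h
  obtain ⟨k, hk⟩ := exists_lt_of_forall_add_const (x := fun k => 1 / (F^[k] v - (1 + √2)))
    (δ := (√2)⁻¹) (by positivity)
    (fun k => by simp only [iterate_succ_apply', one_div_F_sub_of_mem_sInt_one (h k)]) 0
  have : F^[k] v - (1 + √2) < 0 := by linarith [(h k).2]
  exact (one_div_neg.2 this).not_gt hk

lemma exists_ge_ne_of_not_forall_iterate_mem {i : ℕ}
    (hesc : ∀ v, ¬ ∀ k, F^[k] v ∈ sInt i) {u : ℝ} {s : ℕ → ℕ}
    (hu : ∀ k, F^[k] u ∈ sInt (s k)) (m : ℕ) : ∃ k ≥ m, s k ≠ i := by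
  by_contra! h
  refine hesc (F^[m] u) fun k => ?_
  rw [← iterate_add_apply, ← h (k + m) (by omega)]
  exact hu _

theorem octagonCF_unique_point_general (u u' : ℝ) (s : ℕ → ℕ)
    (hu : ∀ k, F^[k] u ∈ sInt (s k))
    (hu' : ∀ k, F^[k] u' ∈ sInt (s k)) :
    u = u' := by
  by_contra hne
  set d : ℕ → ℝ := fun k => |F^[k] u - F^[k] u'| with hd
  have hmono : Monotone d := monotone_nat_of_le_succ fun k => by
    simpa only [hd, iterate_succ_apply'] using abs_sub_le_abs_F_sub (hu k) (hu' k)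
  have leave7 := exists_ge_ne_of_not_forall_iterate_mem not_forall_iterate_mem_sInt_seven hu
  have leave1 := exists_ge_ne_of_not_forall_iterate_mem not_forall_iterate_mem_sInt_one hu
  have hbdd : BddAbove (range d) := ⟨√2, forall_mem_range.2 fun k => by
    obtain ⟨k', hk', h7⟩ := leave7 k
    exact (hmono hk').trans (abs_sub_le_sqrt_two_of_mem_sInt h7 (hu k') (hu' k'))⟩
  refine not_bddAbove_range_of_frequently_two_mul_le hmono (abs_pos.2 (sub_ne_zero.2 hne))
    (fun m => ?_) hbdd
  obtain ⟨k, hkm, h7, h16⟩ := exists_expanding_index leave7 leave1 m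
  refine ⟨k, hkm, ?_⟩
  have hnext : s k = 1 ∨ s k = 6 → F (F^[k] u) < 1 ∧ F (F^[k] u') < 1 := fun hk => by
    simp only [← iterate_succ_apply' F]
    exact ⟨lt_one_of_mem_sInt (h16 hk) (hu _), lt_one_of_mem_sInt (h16 hk) (hu' _)⟩
  simpa only [hd, iterate_succ_apply'] using two_mul_abs_sub_le_abs_F_sub h7 hnext (hu k) (hu' k)

/-- The octagon additive continued fraction expansion determines a unique point: if the
orbits of `u` and `u'` under the octagon Farey map visit the interiors of the same
sectors `Σ_{s(k)}` at every step, then `u = u'`. -/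
theorem octagonCF_unique_point (u u' : ℝ) (s : ℕ → ℕ)
    (hs : ∀ k, 1 ≤ s k ∧ s k ≤ 7)
    (hu : ∀ k, F^[k] u ∈ sInt (s k))
    (hu' : ∀ k, F^[k] u' ∈ sInt (s k)) :
    u = u' :=
  octagonCF_unique_point_general u u' s hu hu'
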